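/- For every real c > 0 and every real a: ∫_0^1 (1 − r²) · (1 − r)^{−4} · ( ((1+r)/(1−r))·c + i·a )^{−7} dr = (6c + ia) / (60·c²·(c + ia)⁶). -/

import Mathlib

/-!
Clearing the denominators `(1 - r)`, the integrand is `(1 + r)(1 - r)⁴ / (c + u + (c - u) r)⁷`
with `u = i a`, a rational function whose denominator has real part `c (1 + r) > 0`. Under
`t = (1 + r)/(1 - r)` it becomes `t dt / (2 (c t + u)⁷)`, whose primitive is a polynomial in
`w = 1/(c t + u) = (1 - r)/(c + u + (c - u) r)`, namely `(u w⁶/6 - w⁵/5)/(2 c²)`. As a function of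
`r` this is smooth on `[0, 1]` and vanishes at `r = 1`, so the integral is minus its value at
`r = 0`, where `w = 1/(c + u)`.
-/

open MeasureTheory

/-- `1 / (c (1 + r)/(1 - r) + u)`, written so that it stays continuous at `r = 1`. -/
noncomputable def cayleyInv (c u : ℂ) (r : ℝ) : ℂ := (1 - r) / (c + u + (c - u) * r)

theorem hasDerivAt_cayleyInv {c u : ℂ} {r : ℝ} (hD : c + u + (c - u) * r ≠ 0) :
    HasDerivAt (cayleyInv c u) (-(2 * c) / (c + u + (c - u) * r) ^ 2) r := by
  have hnum : HasDerivAt (fun x : ℝ => (1 : ℂ) - x) (-1) r := by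
    simpa using (hasDerivAt_id r).ofReal_comp.const_sub (1 : ℂ)
  have hden : HasDerivAt (fun x : ℝ => c + u + (c - u) * x) (c - u) r := by
    simpa using ((hasDerivAt_id r).ofReal_comp.const_mul (c - u)).const_add (c + u)
  exact (hnum.fun_div hden hD).congr_deriv (by field_simp; ring)

theorem hasDerivAt_cayleyInv_poly {c u : ℂ} {r : ℝ} (hc : c ≠ 0)
    (hD : c + u + (c - u) * r ≠ 0) :
    HasDerivAt (fun x => (u / 6 * cayleyInv c u x ^ 6 - cayleyInv c u x ^ 5 / 5) / (2 * c ^ 2))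
      ((1 + r) * (1 - r) ^ 4 / (c + u + (c - u) * r) ^ 7) r := by
  have hw := hasDerivAt_cayleyInv hD
  refine ((((hw.fun_pow 6).const_mul (u / 6)).sub ((hw.fun_pow 5).div_const 5)).div_const
    (2 * c ^ 2)).congr_deriv ?_
  simp only [cayleyInv]
  push_cast
  field_simp
  ring

theorem integral_one_add_mul_one_sub_pow_div_pow {c u : ℂ}
    (hD : ∀ r ∈ Set.Icc (0 : ℝ) 1, c + u + (c - u) * r ≠ 0) :
    ∫ r in (0 : ℝ)..1, (1 + r) * (1 - r) ^ 4 / (c + u + (c - u) * r) ^ 7 =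
      (6 * c + u) / (60 * c ^ 2 * (c + u) ^ 6) := by
  have hc : c ≠ 0 := by
    have := hD 1 (by simp)
    contrapose! this
    simp [this]
  rw [← Set.uIcc_of_le (zero_le_one : (0 : ℝ) ≤ 1)] at hD
  rw [intervalIntegral.integral_eq_sub_of_hasDerivAt
    (fun r hr => hasDerivAt_cayleyInv_poly hc (hD r hr))]
  · simp only [cayleyInv, Complex.ofReal_one, Complex.ofReal_zero, sub_self, zero_div, sub_zero,
      mul_zero, add_zero, mul_one]
    field_simp
    ring
  · exact (ContinuousOn.div (by fun_prop) (by fun_prop) fun r hr =>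
      pow_ne_zero 7 (hD r hr)).intervalIntegrable

theorem add_add_sub_mul_ne_zero_of_abs_re_lt {c : ℝ} {u : ℂ} (hu : |u.re| < c) {r : ℝ}
    (hr : 0 ≤ r) : (c : ℂ) + u + (c - u) * r ≠ 0 := by
  intro h
  have hre := congrArg Complex.re h
  simp only [Complex.add_re, Complex.mul_re, Complex.sub_re, Complex.ofReal_re,
    Complex.ofReal_im, Complex.sub_im, Complex.zero_re, mul_zero, sub_zero] at hre
  obtain ⟨hlo, hhi⟩ := abs_lt.mp hu
  nlinarith

theorem cayley_integrand_eq {c : ℝ} {u : ℂ} {r : ℝ} (hr : r ≠ 1) :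
    (((1 - r ^ 2) / (1 - r) ^ 4 : ℝ) : ℂ) * (((((1 + r) / (1 - r) * c : ℝ) : ℂ) + u) ^ 7)⁻¹ =
      (1 + r) * (1 - r) ^ 4 / (c + u + (c - u) * r) ^ 7 := by
  have : (1 : ℂ) - r ≠ 0 := by
    rw [sub_ne_zero]
    exact_mod_cast hr.symm
  push_cast
  field_simp
  ring

theorem statement_17 (c a : ℝ) (hc : 0 < c) :
    (∫ r in (0 : ℝ)..1,
        (((1 - r ^ 2) / (1 - r) ^ 4 : ℝ) : ℂ) *
          (((((1 + r) / (1 - r) * c : ℝ) : ℂ) + Complex.I * (a : ℂ)) ^ 7)⁻¹) =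
      (6 * (c : ℂ) + Complex.I * (a : ℂ)) /
        (60 * (c : ℂ) ^ 2 * ((c : ℂ) + Complex.I * (a : ℂ)) ^ 6) := by
  have hre : |(Complex.I * a).re| < c := by simpa using hc
  rw [← integral_one_add_mul_one_sub_pow_div_pow fun r hr =>
    add_add_sub_mul_ne_zero_of_abs_re_lt hre hr.1]
  refine intervalIntegral.integral_congr_ae ?_
  filter_upwards [Measure.ae_ne volume 1] with r hr _ using cayley_integrand_eq hr
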